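/- Both dK_m/dr_m and dC_m/dr_m vanish at r_m = r_k, where r_k is the unique solution in (r_c, ∞) of r²·V(r) + (3M - r)² = 0. -/

import Mathlib

/-! For the Schwarzschild–de Sitter potential `V r = 1 - 2M/r - Λr²/3` the parameter `Λ` drops out of
`r² V'(r) = 2 r V(r) + 2 (3M - r)`. Differentiating `K_m` and `C_m` and eliminating `V'` with this
relation, both derivatives become positive multiples of `r² V(r) + (3M - r)²`, which vanishes at `r_k`. -/

open Real

lemma hasDerivAt_sdsPotential (M Λ : ℝ) {r : ℝ} (hr : r ≠ 0) :
    HasDerivAt (fun x => 1 - 2 * M / x - Λ * x ^ 2 / 3) (2 * M / r ^ 2 - 2 * Λ * r / 3) r := by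
  have h : HasDerivAt (fun x => 1 - 2 * M / x - Λ * x ^ 2 / 3) _ r :=
    ((hasDerivAt_const r 1).sub ((hasDerivAt_const r (2 * M)).div (hasDerivAt_id' r) hr)).sub
      (((hasDerivAt_pow 2 r).const_mul Λ).div_const 3)
  convert h using 1
  field_simp
  ring

lemma sq_mul_deriv_sdsPotential (M Λ : ℝ) {r : ℝ} (hr : r ≠ 0) :
    r ^ 2 * (2 * M / r ^ 2 - 2 * Λ * r / 3) =
      2 * r * (1 - 2 * M / r - Λ * r ^ 2 / 3) + 2 * (3 * M - r) := by
  field_simp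
  ring

section

variable {M : ℝ} {V : ℝ → ℝ} {V' r : ℝ}

lemma hasDerivAt_Km (hV : HasDerivAt V V' r) (hneg : V r < 0) (hr : r ≠ 0)
    (hrel : r ^ 2 * V' = 2 * r * V r + 2 * (3 * M - r)) :
    HasDerivAt (fun x => (3 * M - x) / (x ^ 2 * √(-V x)) - (3 / x) * √(-V x))
      ((r ^ 2 * V r + (3 * M - r) ^ 2) / (r ^ 4 * √(-V r) ^ 3)) r := by
  have hs : HasDerivAt (fun x => √(-V x)) (-V' / (2 * √(-V r))) r :=
    hV.neg.sqrt (neg_pos.mpr hneg).ne'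
  have hs0 : 0 < √(-V r) := sqrt_pos.mpr (neg_pos.mpr hneg)
  have hs2 : √(-V r) ^ 2 = -V r := sq_sqrt (neg_pos.mpr hneg).le
  have h : HasDerivAt (fun x => (3 * M - x) / (x ^ 2 * √(-V x)) - (3 / x) * √(-V x)) _ r :=
    (((hasDerivAt_const r (3 * M)).sub (hasDerivAt_id' r)).div
      ((hasDerivAt_pow 2 r).mul hs) (mul_ne_zero (pow_ne_zero 2 hr) hs0.ne')).sub
      (((hasDerivAt_const r 3).div (hasDerivAt_id' r) hr).mul hs)
  convert h using 1
  simp only [Pi.mul_apply, Pi.sub_apply, Pi.div_apply]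
  field_simp
  linear_combination (-(3 * M - r + 3 * r * √(-V r) ^ 2)) * hrel +
    (2 * r ^ 2 - 2 * r * (3 * M - r) - 6 * r ^ 2 * √(-V r) ^ 2) * hs2

lemma hasDerivAt_Cm (hV : HasDerivAt V V' r) (hneg : V r < 0) (hr : r ≠ 0)
    (hrel : r ^ 2 * V' = 2 * r * V r + 2 * (3 * M - r)) :
    HasDerivAt (fun x => x / 3 * (3 * M - x) / √(-V x))
      ((r ^ 2 * V r + (3 * M - r) ^ 2) / (3 * r * √(-V r) ^ 3)) r := by
  have hs : HasDerivAt (fun x => √(-V x)) (-V' / (2 * √(-V r))) r :=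
    hV.neg.sqrt (neg_pos.mpr hneg).ne'
  have hs0 : 0 < √(-V r) := sqrt_pos.mpr (neg_pos.mpr hneg)
  have hs2 : √(-V r) ^ 2 = -V r := sq_sqrt (neg_pos.mpr hneg).le
  have h : HasDerivAt (fun x => x / 3 * (3 * M - x) / √(-V x)) _ r :=
    (((hasDerivAt_id' r).div_const 3).mul
      ((hasDerivAt_const r (3 * M)).sub (hasDerivAt_id' r))).div hs hs0.ne'
  convert h using 1
  simp only [Pi.mul_apply, Pi.sub_apply]
  field_simp
  linear_combination (-(3 * M - r)) * hrel + (2 * r * (r - (3 * M - r))) * hs2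

end

theorem stmt_8_general (Λ M : ℝ)
    (V : ℝ → ℝ) (hV : ∀ r, V r = 1 - 2 * M / r - Λ * r ^ 2 / 3)
    (r_c : ℝ) (hc : 0 < r_c)
    (hlarger : ∀ r, r_c < r → V r < 0)
    (Km Cm : ℝ → ℝ)
    (hKm : ∀ r, Km r = (3 * M - r) / (r ^ 2 * Real.sqrt (-V r)) -
      (3 / r) * Real.sqrt (-V r))
    (hCm : ∀ r, Cm r = (r / 3) * (3 * M - r) / Real.sqrt (-V r))
    (r_k : ℝ) (hk : r_c < r_k)
    (hrk : r_k ^ 2 * V r_k + (3 * M - r_k) ^ 2 = 0) :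
    deriv Km r_k = 0 ∧ deriv Cm r_k = 0 := by
  have hr : r_k ≠ 0 := (hc.trans hk).ne'
  obtain rfl : V = fun x => 1 - 2 * M / x - Λ * x ^ 2 / 3 := funext hV
  obtain rfl : Km = _ := funext hKm
  obtain rfl : Cm = _ := funext hCm
  have hVd := hasDerivAt_sdsPotential M Λ hr
  have hrel := sq_mul_deriv_sdsPotential M Λ hr
  have hneg := hlarger r_k hk
  constructor
  · rw [(hasDerivAt_Km hVd hneg hr hrel).deriv, hrk, zero_div]
  · rw [(hasDerivAt_Cm hVd hneg hr hrel).deriv, hrk, zero_div]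

/-- Both dK_m/dr_m and dC_m/dr_m vanish at the cusp r_m = r_k, where r_k solves
r²V(r) + (3M - r)² = 0 in (r_c, ∞). -/
theorem stmt_8 (Λ M : ℝ) (hΛ : 0 < Λ) (hM : 0 < M) (h9 : 9 * M ^ 2 * Λ < 1)
    (V : ℝ → ℝ) (hV : ∀ r, V r = 1 - 2 * M / r - Λ * r ^ 2 / 3)
    (r_c : ℝ) (hc : 0 < r_c) (hVc : V r_c = 0)
    (hlarger : ∀ r, r_c < r → V r < 0)
    (Km Cm : ℝ → ℝ)
    (hKm : ∀ r, Km r = (3 * M - r) / (r ^ 2 * Real.sqrt (-V r)) -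
      (3 / r) * Real.sqrt (-V r))
    (hCm : ∀ r, Cm r = (r / 3) * (3 * M - r) / Real.sqrt (-V r))
    (r_k : ℝ) (hk : r_c < r_k)
    (hrk : r_k ^ 2 * V r_k + (3 * M - r_k) ^ 2 = 0) :
    deriv Km r_k = 0 ∧ deriv Cm r_k = 0 :=
  stmt_8_general Λ M V hV r_c hc hlarger Km Cm hKm hCm r_k hk hrk
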